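/- The six polynomials p4, p5, p6, p7, p8, p9 defined in the context are linearly independent over ℂ in ℂ[h1,h2,h3]. -/
import Mathlib


open MvPolynomial

set_option maxHeartbeats 4000000

/- Polynomials in `ℂ[h1, h2, h3]` (with `h1 = X 0`, `h2 = X 1`, `h3 = X 2`): the
Harish–Chandra projections of six explicit zero-weight vectors in the `U(B₃)`-submodule
generated, under the left-adjoint action, by the image in the Zhu algebra of the
weight-4ϖ₁ subsingular vector of `V^{-2}(B₃)`. -/

noncomputable def PB4 : MvPolynomial (Fin 3) ℂ :=
  let h1 := (X 0 : MvPolynomial (Fin 3) ℂ); let h2 := (X 1 : MvPolynomial (Fin 3) ℂ); let h3 := (X 2 : MvPolynomial (Fin 3) ℂ);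
  -24*(16*h1^6 + 112*h2*h1^5 + 64*h3*h1^5 + 96*h1^5 + 320*h2^2*h1^4 + 104*h3^2*h1^4 + 496*h2*h1^4 + 368*h2*h3*h1^4 + 264*h3*h1^4 + 156*h1^4 + 480*h2^3*h1^3 + 88*h3^3*h1^3 + 984*h2^2*h1^3 + 472*h2*h3^2*h1^3 + 260*h3^2*h1^3 + 444*h2*h1^3 + 832*h2^2*h3*h1^3 + 1032*h2*h3*h1^3 + 156*h3*h1^3 - 16*h1^3 + 400*h2^4*h1^2 + 41*h3^4*h1^2 + 912*h2^3*h1^2 + 296*h2*h3^3*h1^2 + 106*h3^3*h1^2 + 246*h2^2*h1^2 + 792*h2^2*h3^2*h1^2 + 696*h2*h3^2*h1^2 - 77*h3^2*h1^2 - 464*h2*h1^2 + 928*h2^3*h3*h1^2 + 1412*h2^2*h3*h1^2 + 12*h2*h3*h1^2 - 358*h3*h1^2 - 180*h1^2 + 176*h2^5*h1 + 10*h3^5*h1 + 376*h2^4*h1 + 91*h2*h3^4*h1 + 13*h3^4*h1 - 150*h2^3*h1 + 328*h2^2*h3^3*h1 + 154*h2*h3^3*h1 - 96*h3^3*h1 -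 706*h2^2*h1 + 584*h2^3*h3^2*h1 + 542*h2^2*h3^2*h1 - 415*h2*h3^2*h1 - 269*h3^2*h1 - 476*h2*h1 + 512*h2^4*h3*h1 + 760*h2^3*h3*h1 - 488*h2^2*h3*h1 - 886*h2*h3*h1 - 306*h3*h1 - 72*h1 + 32*h2^6 + h3^6 + 48*h2^5 + 11*h2*h3^5 - h3^5 - 76*h2^4 + 50*h2^2*h3^4 + h2*h3^4 - 13*h3^4 - 72*h2^3 + 120*h2^3*h3^3 + 33*h2^2*h3^3 - 111*h2*h3^3 + 13*h3^3 + 44*h2^2 + 160*h2^4*h3^2 + 100*h2^3*h3^2 - 265*h2^2*h3^2 - 27*h2*h3^2 + 36*h3^2 + 24*h2 + 112*h2^5*h3 + 116*h2^4*h3 - 244*h2^3*h3 - 110*h2^2*h3 + 54*h2*h3 - 36*h3)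

noncomputable def PB5 : MvPolynomial (Fin 3) ℂ :=
  let h1 := (X 0 : MvPolynomial (Fin 3) ℂ); let h2 := (X 1 : MvPolynomial (Fin 3) ℂ); let h3 := (X 2 : MvPolynomial (Fin 3) ℂ);
  -2*(32*h1^6 + 204*h2*h1^5 + 128*h3*h1^5 + 192*h1^5 + 544*h2^2*h1^4 + 200*h3^2*h1^4 + 986*h2*h1^4 + 676*h2*h3*h1^4 + 536*h3*h1^4 + 312*h1^4 + 776*h2^3*h1^3 + 152*h3^3*h1^3 + 1934*h2^2*h1^3 + 839*h2*h3^2*h1^3 + 500*h3^2*h1^3 + 888*h2*h1^3 + 1432*h2^2*h3*h1^3 + 2077*h2*h3*h1^3 + 356*h3*h1^3 - 32*h1^3 + 624*h2^4*h1^2 + 56*h3^4*h1^2 + 1774*h2^3*h1^2 + 474*h2*h3^3*h1^2 + 160*h3^3*h1^2 + 592*h2^2*h1^2 + 1322*h2^2*h3^2*h1^2 + 1301*h2*h3^2*h1^2 - 156*h3^2*h1^2 - 814*h2*h1^2 + 1520*h2^3*h3*h1^2 + 2808*h2^2*h3*h1^2 + 209*h2*h3*h1^2 - 636*h3*h1^2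 - 360*h1^2 + 268*h2^5*h1 + 8*h3^5*h1 + 730*h2^4*h1 + 115*h2*h3^4*h1 + 4*h3^4*h1 - 120*h2^3*h1 + 493*h2^2*h3^3*h1 + 196*h2*h3^3*h1 - 200*h3^3*h1 - 1262*h2^2*h1 + 927*h2^3*h3^2*h1 + 974*h2^2*h3^2*h1 - 697*h2*h3^2*h1 - 580*h3^2*h1 - 824*h2*h1 + 808*h2^4*h3*h1 + 1497*h2^3*h3*h1 - 637*h2^2*h3*h1 - 1718*h2*h3*h1 - 528*h3*h1 - 144*h1 + 48*h2^6 + 96*h2^5 + 8*h2*h3^5 - 72*h2^4 + 59*h2^2*h3^4 - 14*h2*h3^4 - 144*h2^3 + 171*h2^3*h3^3 + 18*h2^2*h3^3 - 120*h2*h3^3 + 24*h2^2 + 244*h2^4*h3^2 + 167*h2^3*h3^2 - 319*h2^2*h3^2 - 118*h2*h3^2 + 48*h2 + 172*h2^5*h3 + 230*h2^4*h3 - 272*h2^3*h3 - 254*h2^2*h3 + 28*h2*h3)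

noncomputable def PB6 : MvPolynomial (Fin 3) ℂ :=
  let h1 := (X 0 : MvPolynomial (Fin 3) ℂ); let h2 := (X 1 : MvPolynomial (Fin 3) ℂ); let h3 := (X 2 : MvPolynomial (Fin 3) ℂ);
  -4*(16*h1^6 + 97*h2*h1^5 + 64*h3*h1^5 + 96*h1^5 + 246*h2^2*h1^4 + 96*h3^2*h1^4 + 462*h2*h1^4 + 323*h2*h3*h1^4 + 272*h3*h1^4 + 156*h1^4 + 334*h2^3*h1^3 + 64*h3^3*h1^3 + 860*h2^2*h1^3 + 387*h2*h3^2*h1^3 + 240*h3^2*h1^3 + 477*h2*h1^3 + 654*h2^2*h3*h1^3 + 989*h2*h3*h1^3 + 200*h3*h1^3 - 16*h1^3 + 256*h2^4*h1^2 + 16*h3^4*h1^2 + 760*h2^3*h1^2 + 193*h2*h3^3*h1^2 + 48*h3^3*h1^2 + 402*h2^2*h1^2 + 586*h2^2*h3^2*h1^2 + 576*h2*h3^2*h1^2 - 68*h3^2*h1^2 - 312*h2*h1^2 + 664*h2^3*h3*h1^2 + 1268*h2^2*h3*h1^2 + 192*h2*h3*h1^2 - 284*h3*h1^2 - 180*h1^2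 + 105*h2^5*h1 + 308*h2^4*h1 + 32*h2*h3^4*h1 - 16*h3^4*h1 + 43*h2^3*h1 + 194*h2^2*h3^3*h1 + 33*h2*h3^3*h1 - 112*h3^3*h1 - 488*h2^2*h1 + 395*h2^3*h3^2*h1 + 393*h2^2*h3^2*h1 - 335*h2*h3^2*h1 - 268*h3^2*h1 - 400*h2*h1 + 338*h2^4*h3*h1 + 649*h2^3*h3*h1 - 203*h2^2*h3*h1 - 734*h2*h3*h1 - 252*h3*h1 - 72*h1 + 18*h2^6 + 42*h2^5 - 6*h2^4 + 16*h2^2*h3^4 - 16*h2*h3^4 - 42*h2^3 + 65*h2^3*h3^3 - 15*h2^2*h3^3 - 50*h2*h3^3 - 12*h2^2 + 100*h2^4*h3^2 + 57*h2^3*h3^2 - 119*h2^2*h3^2 - 38*h2*h3^2 + 69*h2^5*h3 + 98*h2^4*h3 - 77*h2^3*h3 - 86*h2^2*h3 - 4*h2*h3)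

noncomputable def PB7 : MvPolynomial (Fin 3) ℂ :=
  let h1 := (X 0 : MvPolynomial (Fin 3) ℂ); let h2 := (X 1 : MvPolynomial (Fin 3) ℂ); let h3 := (X 2 : MvPolynomial (Fin 3) ℂ);
  -2*h1*(h1 + 2*h2 + h3 + 2)*(32*h1^4 + 180*h2*h1^3 + 96*h3*h1^3 + 128*h1^3 + 372*h2^2*h1^2 + 104*h3^2*h1^2 + 422*h2*h1^2 + 392*h2*h3*h1^2 + 216*h3*h1^2 + 56*h1^2 + 332*h2^3*h1 + 48*h3^3*h1 + 332*h2^2*h1 + 273*h2*h3^2*h1 + 76*h3^2*h1 - 176*h2*h1 + 520*h2^2*h3*h1 + 341*h2*h3*h1 - 132*h3*h1 - 144*h1 + 108*h2^4 + 8*h3^4 - 26*h2^3 + 61*h2*h3^3 - 12*h3^3 - 512*h2^2 + 175*h2^2*h3^2 - 34*h2*h3^2 - 176*h3^2 - 402*h2 + 224*h2^3*h3 - 37*h2^2*h3 - 613*h2*h3 - 228*h3 - 72)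

noncomputable def PB8 : MvPolynomial (Fin 3) ℂ :=
  let h1 := (X 0 : MvPolynomial (Fin 3) ℂ); let h2 := (X 1 : MvPolynomial (Fin 3) ℂ); let h3 := (X 2 : MvPolynomial (Fin 3) ℂ);
  -2*h1*(h1 + 2*h2 + h3 + 2)*(16*h1^4 + 80*h2*h1^3 + 48*h3*h1^3 + 64*h1^3 + 148*h2^2*h1^2 + 48*h3^2*h1^2 + 217*h2*h1^2 + 176*h2*h3*h1^2 + 112*h3*h1^2 + 28*h1^2 + 120*h2^3*h1 + 16*h3^3*h1 + 188*h2^2*h1 + 112*h2*h3^2*h1 + 32*h3^2*h1 - 66*h2*h1 + 212*h2^2*h3*h1 + 171*h2*h3*h1 - 52*h3*h1 - 72*h1 + 36*h2^4 + 3*h2^3 + 16*h2*h3^3 - 16*h3^3 - 216*h2^2 + 64*h2^2*h3^2 - 46*h2*h3^2 - 80*h3^2 - 195*h2 + 84*h2^3*h3 - 31*h2^2*h3 - 261*h2*h3 - 108*h3 - 36)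

noncomputable def PB9 : MvPolynomial (Fin 3) ℂ :=
  let h1 := (X 0 : MvPolynomial (Fin 3) ℂ); let h2 := (X 1 : MvPolynomial (Fin 3) ℂ); let h3 := (X 2 : MvPolynomial (Fin 3) ℂ);
  -4*(h1 - 1)*h1*(h1 + 2*h2 + h3 + 2)*(h1 + 2*h2 + h3 + 3)*(16*h1^2 + 63*h2*h1 + 32*h3*h1 + 32*h1 + 63*h2^2 + 16*h3^2 + 63*h2 + 63*h2*h3 + 32*h3 + 12)

private lemma EV00 : aeval (![(-2:ℂ),-3,0]) PB4 = -3748608 := by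
  simp only [PB4, map_ofNat, map_neg, map_add, map_sub, map_mul, map_pow, aeval_X, map_one,
    Matrix.cons_val_zero, Matrix.cons_val_one, Matrix.head_cons, Matrix.cons_val_two, Matrix.tail_cons]
  norm_num

private lemma EV01 : aeval (![(-3:ℂ),3,3]) PB4 = -900720 := by
  simp only [PB4, map_ofNat, map_neg, map_add, map_sub, map_mul, map_pow, aeval_X, map_one,
    Matrix.cons_val_zero, Matrix.cons_val_one, Matrix.head_cons, Matrix.cons_val_two, Matrix.tail_cons]
  norm_num

private lemma EV02 : aeval (![(3:ℂ),2,-1]) PB4 = -8555520 := by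
  simp only [PB4, map_ofNat, map_neg, map_add, map_sub, map_mul, map_pow, aeval_X, map_one,
    Matrix.cons_val_zero, Matrix.cons_val_one, Matrix.head_cons, Matrix.cons_val_two, Matrix.tail_cons]
  norm_num

private lemma EV03 : aeval (![(-3:ℂ),3,-4]) PB4 = -29808 := by
  simp only [PB4, map_ofNat, map_neg, map_add, map_sub, map_mul, map_pow, aeval_X, map_one,
    Matrix.cons_val_zero, Matrix.cons_val_one, Matrix.head_cons, Matrix.cons_val_two, Matrix.tail_cons]
  norm_num

private lemma EV04 : aeval (![(2:ℂ),2,-4]) PB4 = -137088 := by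
  simp only [PB4, map_ofNat, map_neg, map_add, map_sub, map_mul, map_pow, aeval_X, map_one,
    Matrix.cons_val_zero, Matrix.cons_val_one, Matrix.head_cons, Matrix.cons_val_two, Matrix.tail_cons]
  norm_num

private lemma EV05 : aeval (![(3:ℂ),0,-1]) PB4 = -472320 := by
  simp only [PB4, map_ofNat, map_neg, map_add, map_sub, map_mul, map_pow, aeval_X, map_one,
    Matrix.cons_val_zero, Matrix.cons_val_one, Matrix.head_cons, Matrix.cons_val_two, Matrix.tail_cons]
  norm_num

private lemma EV10 : aeval (![(-2:ℂ),-3,0]) PB5 = -350016 := by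
  simp only [PB5, map_ofNat, map_neg, map_add, map_sub, map_mul, map_pow, aeval_X, map_one,
    Matrix.cons_val_zero, Matrix.cons_val_one, Matrix.head_cons, Matrix.cons_val_two, Matrix.tail_cons]
  norm_num

private lemma EV11 : aeval (![(-3:ℂ),3,3]) PB5 = -181944 := by
  simp only [PB5, map_ofNat, map_neg, map_add, map_sub, map_mul, map_pow, aeval_X, map_one,
    Matrix.cons_val_zero, Matrix.cons_val_one, Matrix.head_cons, Matrix.cons_val_two, Matrix.tail_cons]
  norm_num

private lemma EV12 : aeval (![(3:ℂ),2,-1]) PB5 = -1284160 := by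
  simp only [PB5, map_ofNat, map_neg, map_add, map_sub, map_mul, map_pow, aeval_X, map_one,
    Matrix.cons_val_zero, Matrix.cons_val_one, Matrix.head_cons, Matrix.cons_val_two, Matrix.tail_cons]
  norm_num

private lemma EV13 : aeval (![(-3:ℂ),3,-4]) PB5 = 16128 := by
  simp only [PB5, map_ofNat, map_neg, map_add, map_sub, map_mul, map_pow, aeval_X, map_one,
    Matrix.cons_val_zero, Matrix.cons_val_one, Matrix.head_cons, Matrix.cons_val_two, Matrix.tail_cons]
  norm_num

private lemma EV14 : aeval (![(2:ℂ),2,-4]) PB5 = -8256 := by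
  simp only [PB5, map_ofNat, map_neg, map_add, map_sub, map_mul, map_pow, aeval_X, map_one,
    Matrix.cons_val_zero, Matrix.cons_val_one, Matrix.head_cons, Matrix.cons_val_two, Matrix.tail_cons]
  norm_num

private lemma EV15 : aeval (![(3:ℂ),0,-1]) PB5 = -72000 := by
  simp only [PB5, map_ofNat, map_neg, map_add, map_sub, map_mul, map_pow, aeval_X, map_one,
    Matrix.cons_val_zero, Matrix.cons_val_one, Matrix.head_cons, Matrix.cons_val_two, Matrix.tail_cons]
  norm_num

private lemma EV20 : aeval (![(-2:ℂ),-3,0]) PB6 = -306432 := by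
  simp only [PB6, map_ofNat, map_neg, map_add, map_sub, map_mul, map_pow, aeval_X, map_one,
    Matrix.cons_val_zero, Matrix.cons_val_one, Matrix.head_cons, Matrix.cons_val_two, Matrix.tail_cons]
  norm_num

private lemma EV21 : aeval (![(-3:ℂ),3,3]) PB6 = -214272 := by
  simp only [PB6, map_ofNat, map_neg, map_add, map_sub, map_mul, map_pow, aeval_X, map_one,
    Matrix.cons_val_zero, Matrix.cons_val_one, Matrix.head_cons, Matrix.cons_val_two, Matrix.tail_cons]
  norm_num

private lemma EV22 : aeval (![(3:ℂ),2,-1]) PB6 = -1152960 := by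
  simp only [PB6, map_ofNat, map_neg, map_add, map_sub, map_mul, map_pow, aeval_X, map_one,
    Matrix.cons_val_zero, Matrix.cons_val_one, Matrix.head_cons, Matrix.cons_val_two, Matrix.tail_cons]
  norm_num

private lemma EV23 : aeval (![(-3:ℂ),3,-4]) PB6 = -1416 := by
  simp only [PB6, map_ofNat, map_neg, map_add, map_sub, map_mul, map_pow, aeval_X, map_one,
    Matrix.cons_val_zero, Matrix.cons_val_one, Matrix.head_cons, Matrix.cons_val_two, Matrix.tail_cons]
  norm_num

private lemma EV24 : aeval (![(2:ℂ),2,-4]) PB6 = -5760 := by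
  simp only [PB6, map_ofNat, map_neg, map_add, map_sub, map_mul, map_pow, aeval_X, map_one,
    Matrix.cons_val_zero, Matrix.cons_val_one, Matrix.head_cons, Matrix.cons_val_two, Matrix.tail_cons]
  norm_num

private lemma EV25 : aeval (![(3:ℂ),0,-1]) PB6 = -67200 := by
  simp only [PB6, map_ofNat, map_neg, map_add, map_sub, map_mul, map_pow, aeval_X, map_one,
    Matrix.cons_val_zero, Matrix.cons_val_one, Matrix.head_cons, Matrix.cons_val_two, Matrix.tail_cons]
  norm_num

private lemma EV30 : aeval (![(-2:ℂ),-3,0]) PB7 = -708480 := by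
  simp only [PB7, map_ofNat, map_neg, map_add, map_sub, map_mul, map_pow, aeval_X, map_one,
    Matrix.cons_val_zero, Matrix.cons_val_one, Matrix.head_cons, Matrix.cons_val_two, Matrix.tail_cons]
  norm_num

private lemma EV31 : aeval (![(-3:ℂ),3,3]) PB7 = -824256 := by
  simp only [PB7, map_ofNat, map_neg, map_add, map_sub, map_mul, map_pow, aeval_X, map_one,
    Matrix.cons_val_zero, Matrix.cons_val_one, Matrix.head_cons, Matrix.cons_val_two, Matrix.tail_cons]
  norm_num

private lemma EV32 : aeval (![(3:ℂ),2,-1]) PB7 = -1423680 := by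
  simp only [PB7, map_ofNat, map_neg, map_add, map_sub, map_mul, map_pow, aeval_X, map_one,
    Matrix.cons_val_zero, Matrix.cons_val_one, Matrix.head_cons, Matrix.cons_val_two, Matrix.tail_cons]
  norm_num

private lemma EV33 : aeval (![(-3:ℂ),3,-4]) PB7 = 3060 := by
  simp only [PB7, map_ofNat, map_neg, map_add, map_sub, map_mul, map_pow, aeval_X, map_one,
    Matrix.cons_val_zero, Matrix.cons_val_one, Matrix.head_cons, Matrix.cons_val_two, Matrix.tail_cons]
  norm_num

private lemma EV34 : aeval (![(2:ℂ),2,-4]) PB7 = -22208 := by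
  simp only [PB7, map_ofNat, map_neg, map_add, map_sub, map_mul, map_pow, aeval_X, map_one,
    Matrix.cons_val_zero, Matrix.cons_val_one, Matrix.head_cons, Matrix.cons_val_two, Matrix.tail_cons]
  norm_num

private lemma EV35 : aeval (![(3:ℂ),0,-1]) PB7 = -72000 := by
  simp only [PB7, map_ofNat, map_neg, map_add, map_sub, map_mul, map_pow, aeval_X, map_one,
    Matrix.cons_val_zero, Matrix.cons_val_one, Matrix.head_cons, Matrix.cons_val_two, Matrix.tail_cons]
  norm_num

private lemma EV40 : aeval (![(-2:ℂ),-3,0]) PB8 = -210816 := by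
  simp only [PB8, map_ofNat, map_neg, map_add, map_sub, map_mul, map_pow, aeval_X, map_one,
    Matrix.cons_val_zero, Matrix.cons_val_one, Matrix.head_cons, Matrix.cons_val_two, Matrix.tail_cons]
  norm_num

private lemma EV41 : aeval (![(-3:ℂ),3,3]) PB8 = -492480 := by
  simp only [PB8, map_ofNat, map_neg, map_add, map_sub, map_mul, map_pow, aeval_X, map_one,
    Matrix.cons_val_zero, Matrix.cons_val_one, Matrix.head_cons, Matrix.cons_val_two, Matrix.tail_cons]
  norm_num

private lemma EV42 : aeval (![(3:ℂ),2,-1]) PB8 = -627840 := by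
  simp only [PB8, map_ofNat, map_neg, map_add, map_sub, map_mul, map_pow, aeval_X, map_one,
    Matrix.cons_val_zero, Matrix.cons_val_one, Matrix.head_cons, Matrix.cons_val_two, Matrix.tail_cons]
  norm_num

private lemma EV43 : aeval (![(-3:ℂ),3,-4]) PB8 = -1122 := by
  simp only [PB8, map_ofNat, map_neg, map_add, map_sub, map_mul, map_pow, aeval_X, map_one,
    Matrix.cons_val_zero, Matrix.cons_val_one, Matrix.head_cons, Matrix.cons_val_two, Matrix.tail_cons]
  norm_num

private lemma EV44 : aeval (![(2:ℂ),2,-4]) PB8 = -6240 := by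
  simp only [PB8, map_ofNat, map_neg, map_add, map_sub, map_mul, map_pow, aeval_X, map_one,
    Matrix.cons_val_zero, Matrix.cons_val_one, Matrix.head_cons, Matrix.cons_val_two, Matrix.tail_cons]
  norm_num

private lemma EV45 : aeval (![(3:ℂ),0,-1]) PB8 = -33600 := by
  simp only [PB8, map_ofNat, map_neg, map_add, map_sub, map_mul, map_pow, aeval_X, map_one,
    Matrix.cons_val_zero, Matrix.cons_val_one, Matrix.head_cons, Matrix.cons_val_two, Matrix.tail_cons]
  norm_num

private lemma EV50 : aeval (![(-2:ℂ),-3,0]) PB9 = -552960 := by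
  simp only [PB9, map_ofNat, map_neg, map_add, map_sub, map_mul, map_pow, aeval_X, map_one,
    Matrix.cons_val_zero, Matrix.cons_val_one, Matrix.head_cons, Matrix.cons_val_two, Matrix.tail_cons]
  norm_num

private lemma EV51 : aeval (![(-3:ℂ),3,3]) PB9 = -2654208 := by
  simp only [PB9, map_ofNat, map_neg, map_add, map_sub, map_mul, map_pow, aeval_X, map_one,
    Matrix.cons_val_zero, Matrix.cons_val_one, Matrix.head_cons, Matrix.cons_val_two, Matrix.tail_cons]
  norm_num

private lemma EV52 : aeval (![(3:ℂ),2,-1]) PB9 = -1330560 := by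
  simp only [PB9, map_ofNat, map_neg, map_add, map_sub, map_mul, map_pow, aeval_X, map_one,
    Matrix.cons_val_zero, Matrix.cons_val_one, Matrix.head_cons, Matrix.cons_val_two, Matrix.tail_cons]
  norm_num

private lemma EV53 : aeval (![(-3:ℂ),3,-4]) PB9 = -480 := by
  simp only [PB9, map_ofNat, map_neg, map_add, map_sub, map_mul, map_pow, aeval_X, map_one,
    Matrix.cons_val_zero, Matrix.cons_val_one, Matrix.head_cons, Matrix.cons_val_two, Matrix.tail_cons]
  norm_num

private lemma EV54 : aeval (![(2:ℂ),2,-4]) PB9 = -22080 := by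
  simp only [PB9, map_ofNat, map_neg, map_add, map_sub, map_mul, map_pow, aeval_X, map_one,
    Matrix.cons_val_zero, Matrix.cons_val_one, Matrix.head_cons, Matrix.cons_val_two, Matrix.tail_cons]
  norm_num

private lemma EV55 : aeval (![(3:ℂ),0,-1]) PB9 = -67200 := by
  simp only [PB9, map_ofNat, map_neg, map_add, map_sub, map_mul, map_pow, aeval_X, map_one,
    Matrix.cons_val_zero, Matrix.cons_val_one, Matrix.head_cons, Matrix.cons_val_two, Matrix.tail_cons]
  norm_num

/-- The six polynomials `PB4, …, PB9` are linearly independent over ℂ in `ℂ[h1, h2, h3]`. -/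
theorem B3_subsingular_projections_linearIndependent :
    LinearIndependent ℂ ![PB4, PB5, PB6, PB7, PB8, PB9] := by
  rw [Fintype.linearIndependent_iff]
  intro g hg
  rw [Fin.sum_univ_six] at hg
  simp only [show (![PB4, PB5, PB6, PB7, PB8, PB9] : Fin 6 → MvPolynomial (Fin 3) ℂ) 0 = PB4 from rfl, show (![PB4, PB5, PB6, PB7, PB8, PB9] : Fin 6 → MvPolynomial (Fin 3) ℂ) 1 = PB5 from rfl, show (![PB4, PB5, PB6, PB7, PB8, PB9] : Fin 6 → MvPolynomial (Fin 3) ℂ) 2 = PB6 from rfl, show (![PB4, PB5, PB6, PB7, PB8, PB9] : Fin 6 → MvPolynomial (Fin 3) ℂ) 3 = PB7 from rfl, show (![PB4, PB5, PB6, PB7, PB8, PB9] : Fin 6 → MvPolynomial (Fin 3) ℂ) 4 = PB8 from rfl, show (![PB4, PB5, PB6, PB7, PB8, PB9] : Fin 6 → MvPolynomial (Fin 3) ℂ) 5 = PB9 from rfl] at hg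
  have h0 := congrArg (aeval (![(-2:ℂ),-3,0])) hg
  simp only [map_add, map_smul, map_zero, smul_eq_mul, EV00, EV10, EV20, EV30, EV40, EV50] at h0
  have h1 := congrArg (aeval (![(-3:ℂ),3,3])) hg
  simp only [map_add, map_smul, map_zero, smul_eq_mul, EV01, EV11, EV21, EV31, EV41, EV51] at h1
  have h2 := congrArg (aeval (![(3:ℂ),2,-1])) hg
  simp only [map_add, map_smul, map_zero, smul_eq_mul, EV02, EV12, EV22, EV32, EV42, EV52] at h2
  have h3 := congrArg (aeval (![(-3:ℂ),3,-4])) hg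
  simp only [map_add, map_smul, map_zero, smul_eq_mul, EV03, EV13, EV23, EV33, EV43, EV53] at h3
  have h4 := congrArg (aeval (![(2:ℂ),2,-4])) hg
  simp only [map_add, map_smul, map_zero, smul_eq_mul, EV04, EV14, EV24, EV34, EV44, EV54] at h4
  have h5 := congrArg (aeval (![(3:ℂ),0,-1])) hg
  simp only [map_add, map_smul, map_zero, smul_eq_mul, EV05, EV15, EV25, EV35, EV45, EV55] at h5
  have hg0 : g 0 = 0 := by linear_combination ((311829549115 : ℂ)/407829766365700992) * h0 + ((22450201495 : ℂ)/356851045569988368) * h1 + ((3429768167 : ℂ)/16992906931904208) * h2 + ((-7016716025 : ℂ)/4956264521805394) * h3 + ((-263202156115 : ℂ)/11328604621269472) * h4 + ((-581028019201 : ℂ)/113286046212694720) * h5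
  have hg1 : g 1 = 0 := by linear_combination ((850280667565 : ℂ)/203914883182850496) * h0 + ((7880980573 : ℂ)/38234040596784468) * h1 + ((-94873518841 : ℂ)/42482267329760520) * h2 + ((16699082691 : ℂ)/354018894414671) * h3 + ((-378356950529 : ℂ)/5664302310634736) * h4 + ((264820090249 : ℂ)/11328604621269472) * h5
  have hg2 : g 2 = 0 := by linear_combination ((-1029431986879 : ℂ)/76468081193568936) * h0 + ((-752488296515 : ℂ)/802914852532473828) * h1 + ((3806057312621 : ℂ)/203914883182850496) * h2 + ((11159302649 : ℂ)/14868793565416182) * h3 + ((428379546455 : ℂ)/2124113366488026) * h4 + ((-32631354609559 : ℂ)/113286046212694720) * h5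
  have hg3 : g 3 = 0 := by linear_combination ((-210944438985 : ℂ)/22657209242538944) * h0 + ((-14557687009 : ℂ)/89212761392497092) * h1 + ((142299892991 : ℂ)/56643023106347360) * h2 + ((91427520703 : ℂ)/7434396782708091) * h3 + ((1567905564547 : ℂ)/11328604621269472) * h4 + ((-4163152720927 : ℂ)/339858138638084160) * h5
  have hg4 : g 4 = 0 := by linear_combination ((9885712747483 : ℂ)/305872324774275744) * h0 + ((469122264218 : ℂ)/200728713133118457) * h1 + ((-7368322130567 : ℂ)/127446801989281560) * h2 + ((-6792377070905 : ℂ)/44606380696248546) * h3 + ((-3690843852403 : ℂ)/16992906931904208) * h4 + ((437873528447057 : ℂ)/509787207957126240) * h5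
  have hg5 : g 5 = 0 := by linear_combination ((-784277486971 : ℂ)/305872324774275744) * h0 + ((-1155468998881 : ℂ)/1605829705064947656) * h1 + ((135810459649 : ℂ)/15930850248660195) * h2 + ((1928887049651 : ℂ)/89212761392497092) * h3 + ((-441650406305 : ℂ)/67971627727616832) * h4 + ((-67382031774757 : ℂ)/509787207957126240) * h5
  intro i
  fin_cases i
  · exact hg0
  · exact hg1
  · exact hg2
  · exact hg3
  · exact hg4
  · exact hg5
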